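/- arXiv:2211.08756 — 3 statements merged into one kernel-verified Lean document; each statement's English description precedes it below -/
import Mathlib

section
/- For any cube Q in ℝⁿ and any x ∈ Q, the sharp maximal function of the characteristic function of Q satisfies M^♯(χ_Q)(x) = 1/2. -/
/-!
If `χ_Q` has average `t` on a cube `R`, then `|χ_Q - t|` equals `1 - t` on `Q` and `t` off `Q`,
so the mean oscillation of `χ_Q` over `R` is `2 t (1 - t) ≤ 1 / 2`. Equality holds when `t = 1 / 2`,
e.g. for the cube with the same lower corner as `Q` and twice its volume, which contains `x`.
-/

open MeasureTheory Set

noncomputable section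

/-- Axis-parallel cube in `ℝⁿ` with lower corner `a` and side length `h`. -/
def cube {n : ℕ} (a : Fin n → ℝ) (h : ℝ) : Set (Fin n → ℝ) :=
  Set.Icc a (fun i => a i + h)

/-- Lebesgue measure of the cube, as a real number. -/
def vol {n : ℕ} (a : Fin n → ℝ) (h : ℝ) : ℝ :=
  (volume (cube a h)).toReal

/-- Mean value `b_Q` of `b` over the cube. -/
def avg {n : ℕ} (b : (Fin n → ℝ) → ℝ) (a : Fin n → ℝ) (h : ℝ) : ℝ :=
  (vol a h)⁻¹ * ∫ y in cube a h, b y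

/-- Values over which the sharp maximal function takes its supremum. -/
def sharpSet {n : ℕ} (f : (Fin n → ℝ) → ℝ) (x : Fin n → ℝ) : Set ℝ :=
  {r | ∃ a c, 0 < c ∧ x ∈ cube a c ∧
    r = (vol a c)⁻¹ * ∫ y in cube a c, |f y - avg f a c|}

/-- Sharp maximal function `M^♯ f`. -/
def sharpMax {n : ℕ} (f : (Fin n → ℝ) → ℝ) (x : Fin n → ℝ) : ℝ :=
  sSup (sharpSet f x)

/-- Values over which the (variable) fractional maximal function takes its supremum. -/
def fracSet {n : ℕ} (γ : ℝ) (f : (Fin n → ℝ) → ℝ) (x : Fin n → ℝ) : Set ℝ :=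
  {r | ∃ a c, 0 < c ∧ x ∈ cube a c ∧
    r = (vol a c) ^ (γ / (n : ℝ) - 1) * ∫ y in cube a c, |f y|}

/-- Fractional maximal function `M_γ f` (with `γ` a real number; applying it with
`γ = δ x` gives the variable fractional maximal operator `M_{δ(x)}`). -/
def fracMax {n : ℕ} (γ : ℝ) (f : (Fin n → ℝ) → ℝ) (x : Fin n → ℝ) : ℝ :=
  sSup (fracSet γ f x)

/-- Values over which the fractional maximal commutator takes its supremum. -/
def commSet {n : ℕ} (α : ℝ) (b f : (Fin n → ℝ) → ℝ) (x : Fin n → ℝ) : Set ℝ :=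
  {r | ∃ a c, 0 < c ∧ x ∈ cube a c ∧
    r = (vol a c) ^ (α / (n : ℝ) - 1) * ∫ y in cube a c, |b x - b y| * |f y|}

/-- Fractional maximal commutator `M_{α,b} f`. -/
def maxComm {n : ℕ} (α : ℝ) (b f : (Fin n → ℝ) → ℝ) (x : Fin n → ℝ) : ℝ :=
  sSup (commSet α b f x)

/-- Values for the fractional maximal operator restricted to subcubes of a fixed cube. -/
def fracSetIn {n : ℕ} (γ : ℝ) (Qa : Fin n → ℝ) (Qh : ℝ) (f : (Fin n → ℝ) → ℝ)
    (x : Fin n → ℝ) : Set ℝ :=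
  {r | ∃ a c, 0 < c ∧ x ∈ cube a c ∧ cube a c ⊆ cube Qa Qh ∧
    r = (vol a c) ^ (γ / (n : ℝ) - 1) * ∫ y in cube a c, |f y|}

/-- Fractional maximal operator `M_{γ,Q₀}` restricted to subcubes of `Q₀ = cube Qa Qh`. -/
def fracMaxIn {n : ℕ} (γ : ℝ) (Qa : Fin n → ℝ) (Qh : ℝ) (f : (Fin n → ℝ) → ℝ)
    (x : Fin n → ℝ) : ℝ :=
  sSup (fracSetIn γ Qa Qh f x)

/-- Luxemburg norm on the variable Lebesgue space `L^{p(·)}(ℝⁿ)`. -/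
def LuxNorm {n : ℕ} (p : (Fin n → ℝ) → ℝ) (f : (Fin n → ℝ) → ℝ) : ℝ :=
  sInf {lam : ℝ | 0 < lam ∧ ∫ x, (|f x| / lam) ^ p x ∂volume ≤ 1}

end

namespace MeasureTheory

variable {α : Type*} [MeasurableSpace α] {μ : Measure α} {S : Set α}

lemma average_indicator_one (hS : MeasurableSet S) :
    ⨍ y, S.indicator (1 : α → ℝ) y ∂μ = μ.real S / μ.real univ := by
  rw [average_eq, integral_indicator_one hS, smul_eq_mul, inv_mul_eq_div]

variable [IsFiniteMeasure μ]

lemma average_indicator_one_mem_Icc (hS : MeasurableSet S) :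
    ⨍ y, S.indicator (1 : α → ℝ) y ∂μ ∈ Icc 0 1 := by
  rw [average_indicator_one hS]
  exact ⟨by positivity, div_le_one_of_le₀ (measureReal_mono (subset_univ S)) (by positivity)⟩

variable [NeZero μ]

lemma average_abs_indicator_one_sub {t : ℝ} (hS : MeasurableSet S) (ht : t ∈ Icc (0 : ℝ) 1) :
    ⨍ y, |S.indicator (1 : α → ℝ) y - t| ∂μ = (1 - 2 * t) * ⨍ y, S.indicator 1 y ∂μ + t := by
  have hpt : ∀ y, |S.indicator (1 : α → ℝ) y - t| = (1 - 2 * t) * S.indicator 1 y + t := by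
    intro y
    by_cases hy : y ∈ S
    · rw [indicator_of_mem hy, Pi.one_apply, abs_of_nonneg (by linarith [ht.2])]; ring
    · rw [indicator_of_notMem hy, abs_of_nonpos (by linarith [ht.1])]; ring
  have hχ : Integrable (S.indicator (1 : α → ℝ)) μ := (integrable_const 1).indicator hS
  have hμ := measureReal_univ_ne_zero (μ := μ)
  simp only [hpt, average_eq, smul_eq_mul]
  rw [integral_add (hχ.const_mul _) (integrable_const t),
    integral_const_mul, integral_const, smul_eq_mul]
  field_simp

lemma average_abs_indicator_one_sub_average (hS : MeasurableSet S) :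
    ⨍ y, |S.indicator (1 : α → ℝ) y - ⨍ z, S.indicator 1 z ∂μ| ∂μ =
      2 * (⨍ y, S.indicator (1 : α → ℝ) y ∂μ) * (1 - ⨍ y, S.indicator 1 y ∂μ) := by
  rw [average_abs_indicator_one_sub hS (average_indicator_one_mem_Icc hS)]
  ring

lemma average_abs_indicator_one_sub_average_le (hS : MeasurableSet S) :
    ⨍ y, |S.indicator (1 : α → ℝ) y - ⨍ z, S.indicator 1 z ∂μ| ∂μ ≤ 1 / 2 := by
  rw [average_abs_indicator_one_sub_average hS]
  nlinarith [sq_nonneg (2 * ⨍ y, S.indicator (1 : α → ℝ) y ∂μ - 1)]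

end MeasureTheory

section Cube

variable {n : ℕ}

lemma volume_cube (a : Fin n → ℝ) (c : ℝ) : volume (cube a c) = ENNReal.ofReal c ^ n := by
  simp [cube, Real.volume_Icc_pi, Finset.prod_const]

lemma measureReal_cube (a : Fin n → ℝ) {c : ℝ} (hc : 0 ≤ c) : volume.real (cube a c) = c ^ n := by
  rw [measureReal_def, volume_cube, ENNReal.toReal_pow, ENNReal.toReal_ofReal hc]

lemma measurableSet_cube (a : Fin n → ℝ) (c : ℝ) : MeasurableSet (cube a c) :=
  measurableSet_Icc

lemma cube_subset_cube (a : Fin n → ℝ) {h c : ℝ} (hhc : h ≤ c) : cube a h ⊆ cube a c :=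
  Icc_subset_Icc le_rfl fun i => by simp only; linarith

lemma sharpSet_eq (f : (Fin n → ℝ) → ℝ) (x : Fin n → ℝ) :
    sharpSet f x = {r | ∃ a c, 0 < c ∧ x ∈ cube a c ∧
      r = ⨍ y in cube a c, |f y - ⨍ z in cube a c, f z|} := by
  simp only [sharpSet, avg, vol, setAverage_eq, measureReal_def, smul_eq_mul]

lemma isFiniteMeasure_restrict_cube (a : Fin n → ℝ) (c : ℝ) :
    IsFiniteMeasure (volume.restrict (cube a c)) :=
  isFiniteMeasure_restrict.2 (by simp [volume_cube])

lemma neZero_restrict_cube (a : Fin n → ℝ) {c : ℝ} (hc : 0 < c) :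
    NeZero (volume.restrict (cube a c)) :=
  ⟨by simp [volume_cube, hc]⟩

lemma half_mem_upperBounds_sharpSet_indicator {S : Set (Fin n → ℝ)} (hS : MeasurableSet S)
    (x : Fin n → ℝ) : 1 / 2 ∈ upperBounds (sharpSet (S.indicator 1) x) := by
  rw [sharpSet_eq]
  rintro r ⟨a, c, hc, -, rfl⟩
  have := isFiniteMeasure_restrict_cube a c
  have := neZero_restrict_cube a hc
  exact average_abs_indicator_one_sub_average_le hS

lemma half_mem_sharpSet_indicator_cube (hn : n ≠ 0) (a : Fin n → ℝ) {h : ℝ} (hh : 0 < h)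
    {x : Fin n → ℝ} (hx : x ∈ cube a h) : 1 / 2 ∈ sharpSet ((cube a h).indicator 1) x := by
  set c := h * 2 ^ (n⁻¹ : ℝ)
  have hhc : h ≤ c := le_mul_of_one_le_right hh.le (Real.one_le_rpow one_le_two (by positivity))
  have hc : 0 < c := hh.trans_le hhc
  have hcn : c ^ n = 2 * h ^ n := by
    rw [mul_pow, Real.rpow_inv_natCast_pow zero_le_two hn, mul_comm]
  have := isFiniteMeasure_restrict_cube a c
  have := neZero_restrict_cube a hc
  have havg : ⨍ y in cube a c, (cube a h).indicator (1 : (Fin n → ℝ) → ℝ) y = 1 / 2 := by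
    rw [average_indicator_one (measurableSet_cube a h),
      measureReal_restrict_apply (measurableSet_cube a h),
      measureReal_restrict_apply_univ, inter_eq_left.2 (cube_subset_cube a hhc),
      measureReal_cube a hh.le, measureReal_cube a hc.le, hcn]
    field_simp [(pow_pos hh n).ne']
  rw [sharpSet_eq]
  refine ⟨a, c, hc, cube_subset_cube a hhc hx, ?_⟩
  rw [average_abs_indicator_one_sub_average (measurableSet_cube a h), havg]
  norm_num

end Cube

/-- for any cube `Q` and any `x ∈ Q`, `M^♯(χ_Q)(x) = 1/2`. -/
theorem statement2 (n : ℕ) (hn : 0 < n) (a : Fin n → ℝ) (h : ℝ) (hh : 0 < h)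
    (x : Fin n → ℝ) (hx : x ∈ cube a h) :
    sharpMax ((cube a h).indicator fun _ => (1 : ℝ)) x = 1 / 2 :=
  IsGreatest.csSup_eq ⟨half_mem_sharpSet_indicator_cube hn.ne' a hh hx,
    half_mem_upperBounds_sharpSet_indicator (measurableSet_cube a h) x⟩
end

section
/- If b belongs to the pointwise variable Lipschitz space L(δ(·)) with norm ‖b‖ and 0 ≤ α < n, then for every x ∈ ℝⁿ the fractional maximal commutator satisfies the pointwise bound M_{α,b}(f)(x) ≤ C ‖b‖ · M_{α+δ(x)}(f)(x), with C depending only on n. -/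
open MeasureTheory Set

/-! On a cube `Q ∋ x` of side `c`, every `y ∈ Q` satisfies `dist x y ≤ c` (sup distance), so the
Lipschitz bound gives `|b x - b y| ≤ B c^{δ(x)}` on `Q`. Since `|Q| = cⁿ`, the extra factor `c^{δ(x)}`
is exactly what turns the `α`-normalisation `|Q|^{α/n - 1}` into the `(α + δ(x))`-normalisation, so
each average in `M_{α,b} f (x)` is at most `B` times an average in `M_{α+δ(x)} f (x)`; one may take
`C = 1`. -/

section Cube

variable {n : ℕ} {a x y : Fin n → ℝ} {c : ℝ}

lemma vol_cube (hc : 0 ≤ c) : vol a c = c ^ n := by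
  rw [vol, cube, Real.volume_Icc_pi_toReal fun i => le_add_of_nonneg_right hc]
  simp

lemma dist_le_of_mem_cube (hc : 0 ≤ c) (hx : x ∈ cube a c) (hy : y ∈ cube a c) :
    dist x y ≤ c :=
  (Real.dist_le_of_mem_pi_Icc hx hy).trans <|
    (dist_pi_le_iff hc).2 fun i => by simp [abs_of_nonneg hc]

lemma vol_rpow_mul_rpow (hn : n ≠ 0) (hc : 0 < c) (α δ : ℝ) :
    vol a c ^ (α / n - 1) * c ^ δ = vol a c ^ ((α + δ) / n - 1) := by
  have hpow (e : ℝ) : vol a c ^ e = c ^ (n * e) := by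
    rw [vol_cube hc.le, ← Real.rpow_natCast, ← Real.rpow_mul hc.le]
  rw [hpow, hpow, ← Real.rpow_add hc]
  congr 1
  field_simp
  ring

end Cube

lemma setIntegral_abs_sub_mul_le {n : ℕ} {b f : (Fin n → ℝ) → ℝ} {x a : Fin n → ℝ}
    {c δ B : ℝ} (hc : 0 ≤ c) (hδ : 0 ≤ δ) (hB : 0 ≤ B)
    (hb : ∀ y, |b x - b y| ≤ B * dist x y ^ δ) (hf : IntegrableOn f (cube a c))
    (hx : x ∈ cube a c) :
    ∫ y in cube a c, |b x - b y| * |f y| ≤ B * c ^ δ * ∫ y in cube a c, |f y| := by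
  have hbQ : ∀ y ∈ cube a c, |b x - b y| ≤ B * c ^ δ := fun y hy =>
    (hb y).trans <| by gcongr; exact dist_le_of_mem_cube hc hx hy
  rw [← integral_const_mul]
  refine setIntegral_mono_of_nonneg (fun y _ => by positivity) (fun y hy => ?_)
    (hf.abs.const_mul _)
  exact mul_le_mul_of_nonneg_right (hbQ y hy) (abs_nonneg _)

lemma fracMax_nonneg {n : ℕ} {γ : ℝ} {f : (Fin n → ℝ) → ℝ} {x : Fin n → ℝ}
    (hbdd : BddAbove (fracSet γ f x)) : 0 ≤ fracMax γ f x := by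
  have hx : x ∈ cube x 1 := ⟨le_rfl, fun i => by simp⟩
  refine le_trans ?_ (le_csSup hbdd ⟨x, 1, one_pos, hx, rfl⟩)
  exact mul_nonneg (Real.rpow_nonneg ENNReal.toReal_nonneg _)
    (integral_nonneg fun y => abs_nonneg _)

lemma le_mul_fracMax_of_mem_commSet {n : ℕ} (hn : n ≠ 0) {α δ B r : ℝ}
    {b f : (Fin n → ℝ) → ℝ} {x : Fin n → ℝ} (hδ : 0 ≤ δ) (hB : 0 ≤ B)
    (hb : ∀ y, |b x - b y| ≤ B * dist x y ^ δ) (hf : LocallyIntegrable f)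
    (hbdd : BddAbove (fracSet (α + δ) f x)) (hr : r ∈ commSet α b f x) :
    r ≤ B * fracMax (α + δ) f x := by
  obtain ⟨a, c, hc, hx, rfl⟩ := hr
  have hQ : vol a c ^ ((α + δ) / n - 1) * ∫ y in cube a c, |f y| ≤ fracMax (α + δ) f x :=
    le_csSup hbdd ⟨a, c, hc, hx, rfl⟩
  calc vol a c ^ (α / n - 1) * ∫ y in cube a c, |b x - b y| * |f y|
      ≤ vol a c ^ (α / n - 1) * (B * c ^ δ * ∫ y in cube a c, |f y|) := by
        gcongr
        · exact Real.rpow_nonneg ENNReal.toReal_nonneg _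
        · exact setIntegral_abs_sub_mul_le hc.le hδ hB hb
            (hf.integrableOn_isCompact isCompact_Icc) hx
    _ = B * (vol a c ^ ((α + δ) / n - 1) * ∫ y in cube a c, |f y|) := by
        rw [← vol_rpow_mul_rpow hn hc]
        ring
    _ ≤ B * fracMax (α + δ) f x := by gcongr

/-- pointwise bound for the fractional maximal commutator:
`M_{α,b} f (x) ≤ C ‖b‖ M_{α+δ(x)} f (x)`, with `C` depending only on `n`. -/
theorem statement5 (n : ℕ) (hn : 0 < n) :
    ∃ C : ℝ, 0 ≤ C ∧
      ∀ (α : ℝ), 0 ≤ α →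
      ∀ (δ : (Fin n → ℝ) → ℝ), (∀ x, 0 < δ x ∧ α + δ x < n) →
      ∀ (b : (Fin n → ℝ) → ℝ) (B : ℝ), 0 ≤ B →
        (∀ x y, |b x - b y| ≤ B * dist x y ^ δ x) →
      ∀ (f : (Fin n → ℝ) → ℝ), LocallyIntegrable f volume →
      ∀ x : Fin n → ℝ,
        BddAbove (fracSet (α + δ x) f x) →
        maxComm α b f x ≤ C * B * fracMax (α + δ x) f x := by
  refine ⟨1, zero_le_one, fun α _ δ hδ b B hB hb f hf x hbdd => ?_⟩
  rw [one_mul]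
  exact Real.sSup_le
    (fun r hr => le_mul_fracMax_of_mem_commSet hn.ne' (hδ x).1.le hB (hb x) hf hbdd hr)
    (mul_nonneg hB (fracMax_nonneg hbdd))
end

section
/- Let 0 ≤ γ < n and p(·), q(·) be exponents with 1/q(x) = 1/p(x) − γ/n and p₊ < n/γ. If there is a constant C such that ‖χ_Q‖_{L^{s(·)}} ‖χ_Q‖_{L^{s'(·)}} ≤ C|Q| for all cubes Q and all admissible exponents s(·) (in particular for s(·) = (1−γ/n)q(·)), then ‖χ_Q‖_{L^{q(·)}} ‖χ_Q‖_{L^{p'(·)}} ≤ C |Q|^{1 − γ/n} for all cubes Q. -/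
open MeasureTheory Set

/-! Luxemburg norms scale as `‖|f|^s‖_{r(·)} = ‖f‖^s_{s r(·)}` for `s > 0`, because `λ ↦ λ^s`
is an increasing bijection of `(0, ∞)`. Since `|χ_Q|^s = χ_Q`, taking `s = 1 - γ/n` gives
`‖χ_Q‖_{q(·)} ‖χ_Q‖_{p'(·)} = (‖χ_Q‖_{s q(·)} ‖χ_Q‖_{s p'(·)})^s ≤ (C|Q|)^s`. -/

theorem sInf_pos_rpow (P : ℝ → Prop) {s : ℝ} (hs : 0 < s) :
    sInf {l : ℝ | 0 < l ∧ P (l ^ s)} ^ s = sInf {μ : ℝ | 0 < μ ∧ P μ} := by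
  set A := {l : ℝ | 0 < l ∧ P (l ^ s)}
  have himage : (· ^ s) '' A = {μ : ℝ | 0 < μ ∧ P μ} := by
    ext μ
    constructor
    · rintro ⟨l, ⟨hl, hP⟩, rfl⟩
      exact ⟨Real.rpow_pos_of_pos hl s, hP⟩
    · rintro ⟨hμ, hP⟩
      have hroot : (μ ^ s⁻¹) ^ s = μ := Real.rpow_inv_rpow hμ.le hs.ne'
      exact ⟨μ ^ s⁻¹, ⟨Real.rpow_pos_of_pos hμ _, hroot.symm ▸ hP⟩, hroot⟩
  rw [← himage]
  rcases A.eq_empty_or_nonempty with hA | hA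
  · simp [hA, Real.zero_rpow hs.ne']
  · exact MonotoneOn.map_csInf_of_continuousWithinAt
      (Real.continuousAt_rpow_const _ _ (Or.inr hs.le)).continuousWithinAt
      (fun x hx y _ hxy => Real.rpow_le_rpow hx.1.le hxy hs.le) hA ⟨0, fun x hx => hx.1.le⟩

section LuxNorm

variable {n : ℕ}

theorem luxNorm_nonneg (r f : (Fin n → ℝ) → ℝ) : 0 ≤ LuxNorm r f :=
  Real.sInf_nonneg fun _ hl => hl.1.le

theorem luxNorm_abs_rpow (r f : (Fin n → ℝ) → ℝ) {s : ℝ} (hs : 0 < s) :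
    LuxNorm r (fun x => |f x| ^ s) = LuxNorm (fun x => s * r x) f ^ s := by
  unfold LuxNorm
  rw [← sInf_pos_rpow _ hs]
  congr
  ext l
  simp only [and_congr_right_iff]
  intro hl
  have hpow : ∀ x, (|(|f x| ^ s)| / l ^ s) ^ r x = (|f x| / l) ^ (s * r x) := fun x => by
    rw [abs_of_nonneg (Real.rpow_nonneg (abs_nonneg _) s),
      ← Real.div_rpow (abs_nonneg _) hl.le, Real.rpow_mul (div_nonneg (abs_nonneg _) hl.le)]
  simp only [hpow]

theorem luxNorm_indicator_one (r : (Fin n → ℝ) → ℝ) (S : Set (Fin n → ℝ)) {s : ℝ}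
    (hs : 0 < s) :
    LuxNorm r (S.indicator fun _ => (1 : ℝ)) =
      LuxNorm (fun x => s * r x) (S.indicator fun _ => (1 : ℝ)) ^ s := by
  rw [← luxNorm_abs_rpow _ _ hs]
  congr
  funext x
  by_cases hx : x ∈ S <;> simp [hx, Real.zero_rpow hs.ne']

end LuxNorm

theorem statement11_general (n : ℕ) (γ : ℝ) (hγ : 0 ≤ γ ∧ γ < n)
    (q p' : (Fin n → ℝ) → ℝ)
    (C : ℝ) (hC : 0 ≤ C)
    (H : ∀ (a : Fin n → ℝ) (h : ℝ), 0 < h →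
      LuxNorm (fun x => (1 - γ / (n : ℝ)) * q x) ((cube a h).indicator fun _ => (1 : ℝ)) *
        LuxNorm (fun x => (1 - γ / (n : ℝ)) * p' x) ((cube a h).indicator fun _ => (1 : ℝ)) ≤
        C * vol a h) :
    ∃ C' : ℝ, 0 ≤ C' ∧ ∀ (a : Fin n → ℝ) (h : ℝ), 0 < h →
      LuxNorm q ((cube a h).indicator fun _ => (1 : ℝ)) *
        LuxNorm p' ((cube a h).indicator fun _ => (1 : ℝ)) ≤
        C' * (vol a h) ^ (1 - γ / (n : ℝ)) := by
  obtain ⟨hγ0, hγn⟩ := hγ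
  have hs : 0 < 1 - γ / (n : ℝ) := by
    rw [sub_pos, div_lt_one (hγ0.trans_lt hγn)]
    exact hγn
  refine ⟨C ^ (1 - γ / (n : ℝ)), Real.rpow_nonneg hC _, fun a h hh => ?_⟩
  have hvol : 0 ≤ vol a h := ENNReal.toReal_nonneg
  rw [luxNorm_indicator_one q _ hs, luxNorm_indicator_one p' _ hs,
    ← Real.mul_rpow (luxNorm_nonneg _ _) (luxNorm_nonneg _ _),
    ← Real.mul_rpow hC hvol]
  exact Real.rpow_le_rpow (mul_nonneg (luxNorm_nonneg _ _) (luxNorm_nonneg _ _)) (H a h hh) hs.le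

/-- Lemma 2.4(ii): if the products of Luxemburg norms of characteristic
functions for the conjugate pair `(1-γ/n)q(·)`, `(1-γ/n)p'(·)` are controlled by `C|Q|`
for all cubes, then `‖χ_Q‖_{L^{q(·)}} ‖χ_Q‖_{L^{p'(·)}} ≤ C' |Q|^{1-γ/n}` for all cubes. -/
theorem statement11 (n : ℕ) (hn : 0 < n) (γ : ℝ) (hγ : 0 ≤ γ ∧ γ < n)
    (p q p' : (Fin n → ℝ) → ℝ)
    (hp : ∀ x, 1 < p x) (hq : ∀ x, 1 < q x)
    (hpq : ∀ x, 1 / q x = 1 / p x - γ / (n : ℝ))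
    (hp' : ∀ x, 1 / p x + 1 / p' x = 1)
    (hupper : ∀ x, γ * p x < n)
    (C : ℝ) (hC : 0 ≤ C)
    (H : ∀ (a : Fin n → ℝ) (h : ℝ), 0 < h →
      LuxNorm (fun x => (1 - γ / (n : ℝ)) * q x) ((cube a h).indicator fun _ => (1 : ℝ)) *
        LuxNorm (fun x => (1 - γ / (n : ℝ)) * p' x) ((cube a h).indicator fun _ => (1 : ℝ)) ≤
        C * vol a h) :
    ∃ C' : ℝ, 0 ≤ C' ∧ ∀ (a : Fin n → ℝ) (h : ℝ), 0 < h →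
      LuxNorm q ((cube a h).indicator fun _ => (1 : ℝ)) *
        LuxNorm p' ((cube a h).indicator fun _ => (1 : ℝ)) ≤
        C' * (vol a h) ^ (1 - γ / (n : ℝ)) :=
  statement11_general n γ hγ q p' C hC H
end
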